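/- For every bounded linear operator A on a complex Hilbert space, (1/4)‖A*A + AA*‖ ≤ (1/4)[ max{‖Re(A) + Im(A)‖², ‖Re(A) − Im(A)‖²} + ‖Re(A) + Im(A)‖·‖Re(A) − Im(A)‖ ] ≤ w²(A). -/

import Mathlib

open scoped InnerProductSpace
open ContinuousLinearMap

/-- The numerical radius of a bounded linear operator. -/
noncomputable def numRadius {H : Type*} [NormedAddCommGroup H] [InnerProductSpace ℂ H]
    (A : H →L[ℂ] H) : ℝ :=
  sSup {r : ℝ | ∃ x : H, ‖x‖ = 1 ∧ r = ‖⟪A x, x⟫_ℂ‖}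

/-- The Crawford number of a bounded linear operator. -/
noncomputable def crawford {H : Type*} [NormedAddCommGroup H] [InnerProductSpace ℂ H]
    (A : H →L[ℂ] H) : ℝ :=
  sInf {r : ℝ | ∃ x : H, ‖x‖ = 1 ∧ r = ‖⟪A x, x⟫_ℂ‖}

/-- The real part of a bounded linear operator. -/
noncomputable def reP {H : Type*} [NormedAddCommGroup H] [InnerProductSpace ℂ H]
    [CompleteSpace H] (A : H →L[ℂ] H) : H →L[ℂ] H :=
  ((2 : ℂ)⁻¹) • (A + adjoint A)

/-- The imaginary part of a bounded linear operator. -/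
noncomputable def imP {H : Type*} [NormedAddCommGroup H] [InnerProductSpace ℂ H]
    [CompleteSpace H] (A : H →L[ℂ] H) : H →L[ℂ] H :=
  ((2 * Complex.I)⁻¹) • (A - adjoint A)

/-! Write `R = ℜ A` and `J = ℑ A`, so that `A = R + iJ`. Then
`A⋆A + AA⋆ = 2(R² + J²) = (R + J)² + (R - J)²`, and the first inequality is the triangle
inequality followed by `a² + b² ≤ max (a², b²) + ab` for `a, b ≥ 0`. For the second, `R ± J` is
self-adjoint, so its norm is the supremum of `|⟪(R ± J)x, x⟫| = |Re⟪Ax, x⟫ ∓ Im⟪Ax, x⟫|`, which is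
at most `√2 |⟪Ax, x⟫|`, over unit vectors `x`. Hence `‖R ± J‖ ≤ √2 w(A)`, and each of
`max (a², b²)` and `ab` is at most `2 w(A)²`. -/

open scoped ComplexStarModule

lemma Complex.abs_re_add_im_le_sqrt_two_mul_norm (z : ℂ) : |z.re + z.im| ≤ √2 * ‖z‖ := by
  rw [← Real.sqrt_sq (norm_nonneg z), ← Real.sqrt_mul zero_le_two]
  refine Real.abs_le_sqrt ?_
  rw [Complex.sq_norm, Complex.normSq_apply]
  nlinarith [sq_nonneg (z.re - z.im)]

lemma Complex.abs_re_sub_im_le_sqrt_two_mul_norm (z : ℂ) : |z.re - z.im| ≤ √2 * ‖z‖ := by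
  simpa [sub_eq_add_neg] using Complex.abs_re_add_im_le_sqrt_two_mul_norm (starRingEnd ℂ z)

lemma sq_add_sq_le_max_sq_add_mul {a b : ℝ} (ha : 0 ≤ a) (hb : 0 ≤ b) :
    a ^ 2 + b ^ 2 ≤ max (a ^ 2) (b ^ 2) + a * b := by
  rcases le_total a b with hab | hab
  · rw [max_eq_right (by gcongr)]; nlinarith
  · rw [max_eq_left (by gcongr)]; nlinarith

lemma max_sq_add_mul_le_two_mul_sq {a b c : ℝ} (ha : 0 ≤ a) (hb : 0 ≤ b) (hac : a ≤ c)
    (hbc : b ≤ c) : max (a ^ 2) (b ^ 2) + a * b ≤ 2 * c ^ 2 := by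
  have : max (a ^ 2) (b ^ 2) ≤ c ^ 2 := max_le (by gcongr) (by gcongr)
  nlinarith [mul_le_mul hac hbc hb (ha.trans hac)]

section StarAlgebra

variable {B : Type*} [NormedRing B] [StarRing B] [NormedAlgebra ℂ B] [StarModule ℂ B]

lemma star_mul_self_add_self_mul_star_eq_sq_add_sq (a : B) :
    star a * a + a * star a =
      (ℜ a + ℑ a : B) * (ℜ a + ℑ a) + (ℜ a - ℑ a : B) * (ℜ a - ℑ a) := by
  rw [star_mul_self_add_self_mul_star]
  noncomm_ring

lemma norm_star_mul_self_add_self_mul_star_le (a : B) :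
    ‖star a * a + a * star a‖ ≤ ‖(ℜ a + ℑ a : B)‖ ^ 2 + ‖(ℜ a - ℑ a : B)‖ ^ 2 := by
  rw [star_mul_self_add_self_mul_star_eq_sq_add_sq, sq, sq]
  exact (norm_add_le _ _).trans (add_le_add (norm_mul_le _ _) (norm_mul_le _ _))

end StarAlgebra

section NumRadius

variable {H : Type*} [NormedAddCommGroup H] [InnerProductSpace ℂ H]

lemma numRadius_nonneg (A : H →L[ℂ] H) : 0 ≤ numRadius A :=
  Real.sSup_nonneg (by rintro _ ⟨x, -, rfl⟩; exact norm_nonneg _)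

lemma norm_inner_self_le_numRadius (A : H →L[ℂ] H) {x : H} (hx : ‖x‖ = 1) :
    ‖⟪A x, x⟫_ℂ‖ ≤ numRadius A := by
  refine le_csSup ⟨‖A‖, ?_⟩ ⟨x, hx, rfl⟩
  rintro _ ⟨y, hy, rfl⟩
  calc ‖⟪A y, y⟫_ℂ‖ ≤ ‖A y‖ * ‖y‖ := norm_inner_le_norm _ _
    _ ≤ ‖A‖ * ‖y‖ * ‖y‖ := by gcongr; exact A.le_opNorm y
    _ = ‖A‖ := by rw [hy, mul_one, mul_one]

lemma numRadius_le {A : H →L[ℂ] H} {M : ℝ} (hM : 0 ≤ M)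
    (h : ∀ x : H, ‖x‖ = 1 → ‖⟪A x, x⟫_ℂ‖ ≤ M) : numRadius A ≤ M :=
  Real.sSup_le (by rintro _ ⟨x, hx, rfl⟩; exact h x hx) hM

lemma norm_le_numRadius_of_isSymmetric {T : H →L[ℂ] H} (hT : (T : H →ₗ[ℂ] H).IsSymmetric) :
    ‖T‖ ≤ numRadius T := by
  rw [T.norm_eq_iSup_rayleighQuotient hT]
  refine ciSup_le fun x => ?_
  rcases eq_or_ne x 0 with rfl | hx
  · simpa using numRadius_nonneg T
  have hu : ‖(‖x‖⁻¹ : ℂ) • x‖ = 1 := norm_smul_inv_norm hx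
  rw [← T.rayleigh_smul x (c := (‖x‖⁻¹ : ℂ)) (by simpa using hx), rayleighQuotient, hu, one_pow,
    div_one, reApplyInnerSelf_apply]
  exact (RCLike.abs_re_le_norm _).trans (norm_inner_self_le_numRadius T hu)

lemma norm_le_mul_numRadius_of_isSymmetric {T : H →L[ℂ] H} (hT : (T : H →ₗ[ℂ] H).IsSymmetric)
    (A : H →L[ℂ] H) {c : ℝ} (hc : 0 ≤ c) (h : ∀ x : H, ‖⟪T x, x⟫_ℂ‖ ≤ c * ‖⟪A x, x⟫_ℂ‖) :
    ‖T‖ ≤ c * numRadius A :=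
  (norm_le_numRadius_of_isSymmetric hT).trans <|
    numRadius_le (mul_nonneg hc (numRadius_nonneg A)) fun x hx =>
      (h x).trans (by gcongr; exact norm_inner_self_le_numRadius A hx)

end NumRadius

section RealImaginaryParts

variable {H : Type*} [NormedAddCommGroup H] [InnerProductSpace ℂ H] [CompleteSpace H]

lemma reP_eq_realPart (A : H →L[ℂ] H) : reP A = ℜ A := by
  rw [reP, realPart_apply_coe, star_eq_adjoint, ← Complex.coe_smul]
  norm_num

lemma imP_eq_imaginaryPart (A : H →L[ℂ] H) : imP A = ℑ A := by
  rw [imP, imaginaryPart_apply_coe, star_eq_adjoint, ← Complex.coe_smul, smul_smul]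
  congr 1
  field_simp
  norm_num

lemma inner_realPart_apply_self (A : H →L[ℂ] H) (x : H) :
    ⟪(ℜ A : H →L[ℂ] H) x, x⟫_ℂ = (⟪A x, x⟫_ℂ).re := by
  rw [realPart_apply_coe, smul_apply, add_apply, inner_smul_left_eq_smul, inner_add_left,
    star_eq_adjoint, adjoint_inner_left, ← inner_conj_symm x (A x), Complex.add_conj,
    Complex.real_smul]
  push_cast
  ring

-- The sign comes from `⟪·, ·⟫_ℂ` being conjugate-linear in its first argument.
lemma inner_imaginaryPart_apply_self (A : H →L[ℂ] H) (x : H) :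
    ⟪(ℑ A : H →L[ℂ] H) x, x⟫_ℂ = -(⟪A x, x⟫_ℂ).im := by
  rw [imaginaryPart_apply_coe, smul_apply, smul_apply, sub_apply, inner_smul_left,
    inner_smul_left_eq_smul, inner_sub_left, star_eq_adjoint, adjoint_inner_left,
    ← inner_conj_symm x (A x), Complex.sub_conj, Complex.real_smul]
  simp only [map_neg, Complex.conj_I, neg_neg, Complex.ofReal_inv, Complex.ofReal_ofNat,
    Complex.ofReal_mul]
  linear_combination ((⟪A x, x⟫_ℂ).im : ℂ) * Complex.I_sq

lemma norm_realPart_add_imaginaryPart_le (A : H →L[ℂ] H) :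
    ‖(ℜ A + ℑ A : H →L[ℂ] H)‖ ≤ √2 * numRadius A := by
  refine norm_le_mul_numRadius_of_isSymmetric ((ℜ A).prop.add (ℑ A).prop).isSymmetric A
    (Real.sqrt_nonneg 2) fun x => ?_
  rw [add_apply, inner_add_left, inner_realPart_apply_self, inner_imaginaryPart_apply_self,
    ← sub_eq_add_neg, ← Complex.ofReal_sub, Complex.norm_real, Real.norm_eq_abs]
  exact Complex.abs_re_sub_im_le_sqrt_two_mul_norm _

lemma norm_realPart_sub_imaginaryPart_le (A : H →L[ℂ] H) :
    ‖(ℜ A - ℑ A : H →L[ℂ] H)‖ ≤ √2 * numRadius A := by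
  refine norm_le_mul_numRadius_of_isSymmetric ((ℜ A).prop.sub (ℑ A).prop).isSymmetric A
    (Real.sqrt_nonneg 2) fun x => ?_
  rw [sub_apply, inner_sub_left, inner_realPart_apply_self, inner_imaginaryPart_apply_self,
    sub_neg_eq_add, ← Complex.ofReal_add, Complex.norm_real, Real.norm_eq_abs]
  exact Complex.abs_re_add_im_le_sqrt_two_mul_norm _

end RealImaginaryParts

theorem stmt9_general {H : Type*} [NormedAddCommGroup H] [InnerProductSpace ℂ H]
    [CompleteSpace H] (A : H →L[ℂ] H) :
    (1/4 : ℝ) * ‖adjoint A * A + A * adjoint A‖ ≤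
        (1/4 : ℝ) * (max (‖reP A + imP A‖ ^ 2) (‖reP A - imP A‖ ^ 2) +
          ‖reP A + imP A‖ * ‖reP A - imP A‖) ∧
    (1/4 : ℝ) * (max (‖reP A + imP A‖ ^ 2) (‖reP A - imP A‖ ^ 2) +
        ‖reP A + imP A‖ * ‖reP A - imP A‖) ≤ numRadius A ^ 2 := by
  rw [reP_eq_realPart, imP_eq_imaginaryPart, ← star_eq_adjoint]
  have hsum := norm_star_mul_self_add_self_mul_star_le A
  have hw : (√2 * numRadius A) ^ 2 = 2 * numRadius A ^ 2 := by
    rw [mul_pow, Real.sq_sqrt zero_le_two]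
  have hmax := max_sq_add_mul_le_two_mul_sq (norm_nonneg _) (norm_nonneg _)
    (norm_realPart_add_imaginaryPart_le A) (norm_realPart_sub_imaginaryPart_le A)
  have hsq := sq_add_sq_le_max_sq_add_mul (norm_nonneg (ℜ A + ℑ A : H →L[ℂ] H))
    (norm_nonneg (ℜ A - ℑ A : H →L[ℂ] H))
  constructor <;> linarith

theorem stmt9 {H : Type*} [NormedAddCommGroup H] [InnerProductSpace ℂ H]
    [CompleteSpace H] [Nontrivial H] (A : H →L[ℂ] H) :
    (1/4 : ℝ) * ‖adjoint A * A + A * adjoint A‖ ≤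
        (1/4 : ℝ) * (max (‖reP A + imP A‖ ^ 2) (‖reP A - imP A‖ ^ 2) +
          ‖reP A + imP A‖ * ‖reP A - imP A‖) ∧
    (1/4 : ℝ) * (max (‖reP A + imP A‖ ^ 2) (‖reP A - imP A‖ ^ 2) +
        ‖reP A + imP A‖ * ‖reP A - imP A‖) ≤ numRadius A ^ 2 :=
  stmt9_general A
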